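/- arXiv:2101.01512 — 10 statements merged into one kernel-verified Lean document; each statement's English description precedes it below -/
import Mathlib

section
/- Let n be a nonnegative integer. The map ϑ(x,y) = (6x+3y+1, 3y+1) is a bijection from C_n onto the set F_n = {(u,v) ∈ U_{12n+4} : u ≡ 1 (mod 3) and v ≡ 1 (mod 3)}. -/
/-!
ϑ is injective, being triangular, and satisfies
`(6x+3y+1)² + 3(3y+1)² = 12·(3x² + 3xy + 3y² + x + 2y) + 4`, so `ϑ p ∈ U_{12n+4}` exactly when
`p ∈ C_n`. For surjectivity, `u² + 3v² ≡ 0 (mod 4)` forces `u ≡ v (mod 2)`; together with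
`u ≡ v ≡ 1 (mod 3)` this gives `(u, v) = ϑ((u - v)/6, (v - 1)/3)`.
-/

/-- `U k` is the set of integer solutions of `x² + 3y² = k`. -/
def U (k : ℤ) : Set (ℤ × ℤ) := {p | p.1 ^ 2 + 3 * p.2 ^ 2 = k}

/-- `C n` is the set of characteristic vectors of 3-core partitions of `n`. -/
def C (n : ℤ) : Set (ℤ × ℤ) :=
  {p | 3 * p.1 ^ 2 + 3 * p.1 * p.2 + 3 * p.2 ^ 2 + p.1 + 2 * p.2 = n}

/-- The map `ϑ(x,y) = (6x+3y+1, 3y+1)`. -/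
def theta : ℤ × ℤ → ℤ × ℤ := fun p => (6 * p.1 + 3 * p.2 + 1, 3 * p.2 + 1)

theorem theta_fst_sq_add_three_mul_snd_sq (p : ℤ × ℤ) :
    (theta p).1 ^ 2 + 3 * (theta p).2 ^ 2 =
      12 * (3 * p.1 ^ 2 + 3 * p.1 * p.2 + 3 * p.2 ^ 2 + p.1 + 2 * p.2) + 4 := by
  simp only [theta]
  ring

theorem theta_mem_U_iff {p : ℤ × ℤ} {n : ℤ} : theta p ∈ U (12 * n + 4) ↔ p ∈ C n := by
  simp only [U, C, Set.mem_ofPred_eq, theta_fst_sq_add_three_mul_snd_sq]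
  omega

theorem theta_fst_modEq (p : ℤ × ℤ) : (theta p).1 ≡ 1 [ZMOD 3] := by
  simp only [theta, Int.ModEq]
  omega

theorem theta_snd_modEq (p : ℤ × ℤ) : (theta p).2 ≡ 1 [ZMOD 3] := by
  simp only [theta, Int.ModEq]
  omega

theorem theta_injective : Function.Injective theta := by
  intro p q h
  simp only [theta, Prod.mk.injEq] at h
  ext <;> omega

theorem modEq_two_of_sq_add_three_mul_sq_eq_four_mul {u v k : ℤ}
    (h : u ^ 2 + 3 * v ^ 2 = 4 * k) : u ≡ v [ZMOD 2] := by
  rw [Int.modEq_iff_dvd, ← even_iff_two_dvd]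
  by_contra hodd
  rw [Int.not_even_iff_odd] at hodd
  have hsum : Odd (v + u) := by convert hodd.add_even (even_two_mul u) using 1; ring
  have hprod : (v - u) * (v + u) = 4 * (v ^ 2 - k) := by linear_combination -h
  exact Int.not_even_iff_odd.2 (hodd.mul hsum) (hprod ▸ Int.even_mul.2 (Or.inl (by decide)))

theorem mem_range_theta {u v : ℤ} (hu : u ≡ 1 [ZMOD 3]) (hv : v ≡ 1 [ZMOD 3])
    (huv : u ≡ v [ZMOD 2]) : (u, v) ∈ Set.range theta := by
  simp only [Int.ModEq] at hu hv huv
  refine ⟨((u - v) / 6, (v - 1) / 3), ?_⟩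
  simp only [theta, Prod.mk.injEq]
  omega

theorem stmt1 (n : ℕ) :
    Set.BijOn theta (C (n : ℤ))
      {p ∈ U (12 * n + 4) | p.1 ≡ 1 [ZMOD 3] ∧ p.2 ≡ 1 [ZMOD 3]} := by
  refine ⟨fun p hp => ⟨theta_mem_U_iff.2 hp, theta_fst_modEq p, theta_snd_modEq p⟩,
    theta_injective.injOn, ?_⟩
  rintro ⟨u, v⟩ ⟨hU, hu, hv⟩
  have huv : u ≡ v [ZMOD 2] :=
    modEq_two_of_sq_add_three_mul_sq_eq_four_mul (k := 3 * n + 1) (by rw [hU]; ring)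
  obtain ⟨p, hp⟩ := mem_range_theta hu hv huv
  exact ⟨p, theta_mem_U_iff.1 (hp ▸ hU), hp⟩
end

section
/- Let n be a nonnegative integer. Then U_{12n+4} is exactly the set of all pairs (6x+3y+1, 3y+1), (3x−3y−1, 3x+3y+1), (−3x−6y−2, 3x), (−6x−3y−1, −3y−1), (−3x+3y+1, −3x−3y−1), (3x+6y+2, −3x), where (x,y) ranges over C_n. -/
def coreForm (x y : ℤ) : ℤ := 3 * x ^ 2 + 3 * x * y + 3 * y ^ 2 + x + 2 * y

def IsImageOfCore (x y : ℤ) (q : ℤ × ℤ) : Prop :=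
  q = (6 * x + 3 * y + 1, 3 * y + 1) ∨
  q = (3 * x - 3 * y - 1, 3 * x + 3 * y + 1) ∨
  q = (-3 * x - 6 * y - 2, 3 * x) ∨
  q = (-6 * x - 3 * y - 1, -3 * y - 1) ∨
  q = (-3 * x + 3 * y + 1, -3 * x - 3 * y - 1) ∨
  q = (3 * x + 6 * y + 2, -3 * x)

theorem IsImageOfCore.sq_add_three_mul_sq {x y : ℤ} {q : ℤ × ℤ} (h : IsImageOfCore x y q) :
    q.1 ^ 2 + 3 * q.2 ^ 2 = 12 * coreForm x y + 4 := by
  rcases h with rfl | rfl | rfl | rfl | rfl | rfl <;> (unfold coreForm; ring)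

theorem not_three_dvd_of_sq_add_three_mul_sq_eq {a b m : ℤ} (h : a ^ 2 + 3 * b ^ 2 = 3 * m + 1) :
    ¬ 3 ∣ a := by
  rintro ⟨c, rfl⟩
  have : 3 * (3 * c ^ 2 + b ^ 2 - m) = 1 := by linear_combination h
  omega

theorem emod_two_eq_of_even_sq_add_three_mul_sq {a b : ℤ} (h : Even (a ^ 2 + 3 * b ^ 2)) :
    a % 2 = b % 2 := by
  rw [Int.even_add, Int.even_mul, Int.even_pow' two_ne_zero, Int.even_pow' two_ne_zero] at h
  simp only [Int.even_iff] at h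
  omega

theorem exists_isImageOfCore {a b : ℤ} (h3 : ¬ 3 ∣ a) (h2 : a % 2 = b % 2) :
    ∃ x y, IsImageOfCore x y (a, b) := by
  simp only [IsImageOfCore, Prod.mk.injEq]
  have ha : a % 3 = 1 ∨ a % 3 = 2 := by omega
  have hb : b % 3 = 0 ∨ b % 3 = 1 ∨ b % 3 = 2 := by omega
  rcases ha with ha | ha <;> rcases hb with hb | hb | hb
  · exact ⟨b / 3, (-a - b - 2) / 6, .inr <| .inr <| .inl <| by omega⟩
  · exact ⟨(a - b) / 6, (b - 1) / 3, .inl <| by omega⟩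
  · exact ⟨(-a - b) / 6, (a - b - 2) / 6, .inr <| .inr <| .inr <| .inr <| .inl <| by omega⟩
  · exact ⟨-b / 3, (a + b - 2) / 6, .inr <| .inr <| .inr <| .inr <| .inr <| by omega⟩
  · exact ⟨(a + b) / 6, (b - a - 2) / 6, .inr <| .inl <| by omega⟩
  · exact ⟨(b - a) / 6, (-b - 1) / 3, .inr <| .inr <| .inr <| .inl <| by omega⟩

theorem stmt2 (n : ℕ) :
    U (12 * n + 4) =
      {q | ∃ x y : ℤ, (x, y) ∈ C (n : ℤ) ∧
        (q = (6 * x + 3 * y + 1, 3 * y + 1) ∨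
         q = (3 * x - 3 * y - 1, 3 * x + 3 * y + 1) ∨
         q = (-3 * x - 6 * y - 2, 3 * x) ∨
         q = (-6 * x - 3 * y - 1, -3 * y - 1) ∨
         q = (-3 * x + 3 * y + 1, -3 * x - 3 * y - 1) ∨
         q = (3 * x + 6 * y + 2, -3 * x))} := by
  ext ⟨a, b⟩
  change a ^ 2 + 3 * b ^ 2 = 12 * n + 4 ↔ ∃ x y, coreForm x y = n ∧ IsImageOfCore x y (a, b)
  constructor
  · intro h
    have hndvd := not_three_dvd_of_sq_add_three_mul_sq_eq (m := 4 * n + 1) (by rw [h]; ring)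
    have hparity := emod_two_eq_of_even_sq_add_three_mul_sq ⟨6 * n + 2, by rw [h]; ring⟩
    obtain ⟨x, y, hxy⟩ := exists_isImageOfCore hndvd hparity
    have hnorm := hxy.sq_add_three_mul_sq
    exact ⟨x, y, by simp only at hnorm; linarith, hxy⟩
  · rintro ⟨x, y, hcore, hxy⟩
    rw [← hcore]
    exact hxy.sq_add_three_mul_sq
end

section
/- Let n be a nonnegative integer. Then the number of integer solutions of x² + 3y² = 12n+4 equals 6 times the number of 3-core partitions of n; that is, |U_{12n+4}| = 6·|C_n| (both sets being finite). -/
/-!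
With `ζ = (1 + √-3)/2`, a pair `(x, y)` with `x ≡ y (mod 2)` is the Eisenstein integer
`z = (x + y√-3)/2`, of norm `(x² + 3y²)/4`. A solution of `x² + 3y² = 12n + 4` is such a `z`
of norm `3n + 1`, hence prime to `3`. The six units represent `(ℤ[ζ]/3)ˣ`, so `z = ζᵏ(ζ + 3w)`
for a unique `k : Fin 6` and `w = a + bζ`, with `k` read off from the residues of `(x, y)`
mod `3`; and `N(ζ + 3w) = 3(3a² + 3ab + 3b² + a + 2b) + 1` is `3n + 1` exactly when `(a, b) ∈ C n`.
-/

theorem finite_U (k : ℤ) : (U k).Finite := by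
  refine (Set.finite_Icc ((-k, -k) : ℤ × ℤ) (k, k)).subset ?_
  rintro ⟨x, y⟩ (h : x ^ 2 + 3 * y ^ 2 = k)
  simp only [Set.mem_Icc, Prod.mk_le_mk]
  refine ⟨⟨?_, ?_⟩, ?_, ?_⟩ <;>
    nlinarith [sq_nonneg (x - 1), sq_nonneg (x + 1), sq_nonneg (y - 1), sq_nonneg (y + 1)]

theorem two_dvd_sub_of_sq_add_three_sq_eq {x y k : ℤ} (h : x ^ 2 + 3 * y ^ 2 = 2 * k) :
    2 ∣ x - y := by
  have heven : Even (x ^ 2 + 3 * y ^ 2) := ⟨k, by rw [h]; ring⟩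
  simp only [Int.even_add, Int.even_mul, Int.even_pow, show ¬ Even (3 : ℤ) by decide, false_or,
    ne_eq, two_ne_zero, not_false_eq_true, and_true] at heven
  rw [← even_iff_two_dvd, Int.even_sub]
  exact heven

theorem not_three_dvd_of_sq_add_three_sq_eq {x y k : ℤ} (h : x ^ 2 + 3 * y ^ 2 = 3 * k + 1) :
    ¬ 3 ∣ x := fun hx => by
  have : (3 : ℤ) ∣ 3 * k + 1 := h ▸ dvd_add (dvd_pow hx two_ne_zero) (dvd_mul_right 3 _)
  omega

/-- `toSolution k (a, b)` is the pair `(x, y)` with `(x + y√-3)/2 = ζᵏ(ζ + 3(a + bζ))`. -/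
def toSolution : Fin 6 → ℤ × ℤ → ℤ × ℤ
  | 0, (a, b) => (6 * a + 3 * b + 1, 3 * b + 1)
  | 1, (a, b) => (3 * a - 3 * b - 1, 3 * a + 3 * b + 1)
  | 2, (a, b) => (-3 * a - 6 * b - 2, 3 * a)
  | 3, (a, b) => (-6 * a - 3 * b - 1, -3 * b - 1)
  | 4, (a, b) => (-3 * a + 3 * b + 1, -3 * a - 3 * b - 1)
  | 5, (a, b) => (3 * a + 6 * b + 2, -3 * a)

theorem toSolution_norm (k : Fin 6) (p : ℤ × ℤ) :
    (toSolution k p).1 ^ 2 + 3 * (toSolution k p).2 ^ 2 =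
      12 * (3 * p.1 ^ 2 + 3 * p.1 * p.2 + 3 * p.2 ^ 2 + p.1 + 2 * p.2) + 4 := by
  obtain ⟨a, b⟩ := p
  fin_cases k <;> simp only [toSolution] <;> ring

theorem toSolution_mem_U_iff {k : Fin 6} {p : ℤ × ℤ} {m : ℤ} :
    toSolution k p ∈ U (12 * m + 4) ↔ p ∈ C m := by
  simp only [U, C, Set.mem_ofPred_eq, toSolution_norm]
  omega

theorem toSolution_injective : Function.Injective (Function.uncurry toSolution) := by
  rintro ⟨k, a, b⟩ ⟨l, c, d⟩ h
  fin_cases k <;> fin_cases l <;>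
    simp only [Function.uncurry_apply_pair, Fin.zero_eta, Fin.mk_one, Fin.reduceFinMk, toSolution,
      Prod.ext_iff, true_and] at h ⊢ <;> omega

theorem exists_toSolution_eq {x y : ℤ} (h2 : 2 ∣ x - y) (h3 : ¬ 3 ∣ x) :
    ∃ k p, toSolution k p = (x, y) := by
  have hx : x % 3 = 1 ∨ x % 3 = 2 := by omega
  have hy : y % 3 = 0 ∨ y % 3 = 1 ∨ y % 3 = 2 := by omega
  rcases hx with hx | hx <;> rcases hy with hy | hy | hy
  · exact ⟨2, (y / 3, (-x - y - 2) / 6), by simp only [toSolution, Prod.ext_iff]; omega⟩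
  · exact ⟨0, ((x - y) / 6, (y - 1) / 3), by simp only [toSolution, Prod.ext_iff]; omega⟩
  · exact ⟨4, (-(x + y) / 6, (x - y - 2) / 6), by simp only [toSolution, Prod.ext_iff]; omega⟩
  · exact ⟨5, (-y / 3, (x + y - 2) / 6), by simp only [toSolution, Prod.ext_iff]; omega⟩
  · exact ⟨1, ((x + y) / 6, (y - x - 2) / 6), by simp only [toSolution, Prod.ext_iff]; omega⟩
  · exact ⟨3, ((y - x) / 6, (-y - 1) / 3), by simp only [toSolution, Prod.ext_iff]; omega⟩

theorem exists_toSolution_eq_of_mem_U {m : ℤ} {q : ℤ × ℤ} (hq : q ∈ U (12 * m + 4)) :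
    ∃ k p, toSolution k p = q := by
  obtain ⟨x, y⟩ := q
  have h : x ^ 2 + 3 * y ^ 2 = 12 * m + 4 := hq
  exact exists_toSolution_eq
    (two_dvd_sub_of_sq_add_three_sq_eq (k := 6 * m + 2) (by rw [h]; ring))
    (not_three_dvd_of_sq_add_three_sq_eq (k := 4 * m + 1) (by rw [h]; ring))

noncomputable def solutionEquiv (m : ℤ) : Fin 6 × C m ≃ U (12 * m + 4) :=
  Equiv.ofBijective (fun q => ⟨toSolution q.1 q.2, toSolution_mem_U_iff.2 q.2.2⟩) <| by
    refine ⟨fun q r h => ?_, fun q => ?_⟩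
    · have := toSolution_injective (a₁ := (q.1, q.2)) (a₂ := (r.1, r.2)) (congrArg Subtype.val h)
      obtain ⟨hk, hp⟩ := Prod.ext_iff.1 this
      exact Prod.ext hk (Subtype.ext hp)
    · obtain ⟨k, p, hkp⟩ := exists_toSolution_eq_of_mem_U q.2
      exact ⟨(k, ⟨p, toSolution_mem_U_iff.1 (hkp ▸ q.2)⟩), Subtype.ext hkp⟩

theorem finite_C (m : ℤ) : (C m).Finite := by
  have := (finite_U (12 * m + 4)).to_subtype
  have := Finite.of_equiv _ (solutionEquiv m).symm
  have := Finite.prod_right (Fin 6) (β := C m)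
  exact Set.toFinite _

theorem ncard_U_twelve_mul_add_four (m : ℤ) : (U (12 * m + 4)).ncard = 6 * (C m).ncard := by
  rw [← Nat.card_coe_set_eq, ← Nat.card_congr (solutionEquiv m), Nat.card_prod, Nat.card_fin,
    Nat.card_coe_set_eq]

theorem stmt3 (n : ℕ) :
    (U (12 * n + 4)).Finite ∧ (C (n : ℤ)).Finite ∧
    (U (12 * n + 4)).ncard = 6 * (C (n : ℤ)).ncard :=
  ⟨finite_U _, finite_C _, ncard_U_twelve_mul_add_four _⟩
end

section
/- Let n be a nonnegative integer. For every pair of residues (a,b) ∈ {(1,1), (2,1), (1,0), (2,2), (1,2), (2,0)} modulo 3, the set {(x,y) ∈ U_{12n+4} : x ≡ a (mod 3) and y ≡ b (mod 3)} has cardinality |C_n|; moreover every (x,y) ∈ U_{12n+4} satisfies x ≢ 0 (mod 3), so these six fibers partition U_{12n+4} into sets of equal cardinality. -/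
def residueFiber (k a b : ℤ) : Set (ℤ × ℤ) :=
  {p ∈ U k | p.1 ≡ a [ZMOD 3] ∧ p.2 ≡ b [ZMOD 3]}

lemma dvd_of_mem_U_of_three_dvd_fst {k : ℤ} {p : ℤ × ℤ} (hp : p ∈ U k) (h3 : 3 ∣ p.1) :
    3 ∣ k := by
  obtain ⟨t, ht⟩ := h3
  exact ⟨3 * t ^ 2 + p.2 ^ 2, by rw [← hp, ht]; ring⟩

lemma even_add_of_even_sq_add_three_mul_sq {x y : ℤ} (h : Even (x ^ 2 + 3 * y ^ 2)) :
    Even (x + y) := by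
  have hsq : Even ((x + y) ^ 2) := by
    have : (x + y) ^ 2 = x ^ 2 + 3 * y ^ 2 - 2 * (y ^ 2 - x * y) := by ring
    rw [this]
    exact h.sub (even_two_mul _)
  exact (Int.even_pow' two_ne_zero).mp hsq

lemma ncard_residueFiber_of_modEq_neg_fst {k a a' b : ℤ} (h : a' ≡ -a [ZMOD 3]) :
    (residueFiber k a' b).ncard = (residueFiber k a b).ncard := by
  have hinv : Function.Involutive (fun p : ℤ × ℤ => (-p.1, p.2)) := fun p => by simp
  rw [← Set.ncard_image_of_injective _ hinv.injective, hinv.image_eq_preimage_symm]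
  congr 1
  ext ⟨x, y⟩
  simp only [residueFiber, U, Int.ModEq, Set.mem_preimage, Set.mem_ofPred_eq, neg_sq] at h ⊢
  omega

lemma ncard_residueFiber_of_modEq_neg_snd {k a b b' : ℤ} (h : b' ≡ -b [ZMOD 3]) :
    (residueFiber k a b').ncard = (residueFiber k a b).ncard := by
  have hinv : Function.Involutive (fun p : ℤ × ℤ => (p.1, -p.2)) := fun p => by simp
  rw [← Set.ncard_image_of_injective _ hinv.injective, hinv.image_eq_preimage_symm]
  congr 1
  ext ⟨x, y⟩
  simp only [residueFiber, U, Int.ModEq, Set.mem_preimage, Set.mem_ofPred_eq, neg_sq] at h ⊢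
  omega

lemma residueFiber_one_one_eq_image (n : ℤ) :
    residueFiber (12 * n + 4) 1 1 =
      (fun q : ℤ × ℤ => (6 * q.1 + 3 * q.2 + 1, 3 * q.2 + 1)) '' C n := by
  have norm_eq (u v : ℤ) : (6 * u + 3 * v + 1) ^ 2 + 3 * (3 * v + 1) ^ 2 =
      12 * (3 * u ^ 2 + 3 * u * v + 3 * v ^ 2 + u + 2 * v) + 4 := by ring
  ext ⟨x, y⟩
  simp only [residueFiber, U, C, Int.ModEq, Set.mem_ofPred_eq, Set.mem_image,
    Prod.mk.injEq, Prod.exists]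
  constructor
  · rintro ⟨hU, hx, hy⟩
    obtain ⟨r, hr⟩ := even_add_of_even_sq_add_three_mul_sq ⟨6 * n + 2, by rw [hU]; ring⟩
    obtain ⟨v, rfl⟩ : ∃ v, y = 3 * v + 1 := ⟨(y - 1) / 3, by omega⟩
    obtain ⟨u, rfl⟩ : ∃ u, x = 6 * u + 3 * v + 1 := ⟨(x - 3 * v - 1) / 6, by omega⟩
    exact ⟨u, v, by linarith [norm_eq u v], rfl, rfl⟩
  · rintro ⟨u, v, hC, rfl, rfl⟩
    exact ⟨by rw [norm_eq, hC], by omega, by omega⟩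

lemma residueFiber_two_zero_eq_image (n : ℤ) :
    residueFiber (12 * n + 4) 2 0 =
      (fun q : ℤ × ℤ => (3 * q.1 + 6 * q.2 + 2, 3 * q.1)) '' C n := by
  have norm_eq (u v : ℤ) : (3 * u + 6 * v + 2) ^ 2 + 3 * (3 * u) ^ 2 =
      12 * (3 * u ^ 2 + 3 * u * v + 3 * v ^ 2 + u + 2 * v) + 4 := by ring
  ext ⟨x, y⟩
  simp only [residueFiber, U, C, Int.ModEq, Set.mem_ofPred_eq, Set.mem_image,
    Prod.mk.injEq, Prod.exists]
  constructor
  · rintro ⟨hU, hx, hy⟩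
    obtain ⟨r, hr⟩ := even_add_of_even_sq_add_three_mul_sq ⟨6 * n + 2, by rw [hU]; ring⟩
    obtain ⟨u, rfl⟩ : ∃ u, y = 3 * u := ⟨y / 3, by omega⟩
    obtain ⟨v, rfl⟩ : ∃ v, x = 3 * u + 6 * v + 2 := ⟨(x - 3 * u - 2) / 6, by omega⟩
    exact ⟨u, v, by linarith [norm_eq u v], rfl, rfl⟩
  · rintro ⟨u, v, hC, rfl, rfl⟩
    exact ⟨by rw [norm_eq, hC], by omega, by omega⟩

lemma ncard_residueFiber_one_one (n : ℤ) :
    (residueFiber (12 * n + 4) 1 1).ncard = (C n).ncard := by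
  rw [residueFiber_one_one_eq_image]
  refine Set.ncard_image_of_injective _ fun ⟨u, v⟩ ⟨u', v'⟩ h => ?_
  simp only [Prod.mk.injEq] at h ⊢
  omega

lemma ncard_residueFiber_two_zero (n : ℤ) :
    (residueFiber (12 * n + 4) 2 0).ncard = (C n).ncard := by
  rw [residueFiber_two_zero_eq_image]
  refine Set.ncard_image_of_injective _ fun ⟨u, v⟩ ⟨u', v'⟩ h => ?_
  simp only [Prod.mk.injEq] at h ⊢
  omega

theorem stmt8 (n : ℕ) :
    (∀ a b : ℤ,
      (a, b) ∈ ({(1, 1), (2, 1), (1, 0), (2, 2), (1, 2), (2, 0)} : Set (ℤ × ℤ)) →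
      {p ∈ U (12 * n + 4) | p.1 ≡ a [ZMOD 3] ∧ p.2 ≡ b [ZMOD 3]}.ncard =
        (C (n : ℤ)).ncard) ∧
    ∀ p ∈ U (12 * n + 4), ¬ (3 : ℤ) ∣ p.1 := by
  have h11 := ncard_residueFiber_one_one n
  have h20 := ncard_residueFiber_two_zero n
  have h12 : (residueFiber (12 * n + 4) 1 2).ncard = (C n).ncard :=
    (ncard_residueFiber_of_modEq_neg_snd rfl).trans h11
  refine ⟨fun a b hab => ?_, fun p hp h3 => ?_⟩
  · simp only [Set.mem_insert_iff, Set.mem_singleton_iff, Prod.mk.injEq] at hab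
    rcases hab with
      ⟨rfl, rfl⟩ | ⟨rfl, rfl⟩ | ⟨rfl, rfl⟩ | ⟨rfl, rfl⟩ | ⟨rfl, rfl⟩ | ⟨rfl, rfl⟩
    · exact h11
    · exact (ncard_residueFiber_of_modEq_neg_fst rfl).trans h11
    · exact (ncard_residueFiber_of_modEq_neg_fst rfl).trans h20
    · exact (ncard_residueFiber_of_modEq_neg_fst rfl).trans h12
    · exact h12
    · exact h20
  · have := dvd_of_mem_U_of_three_dvd_fst hp h3
    omega
end

section
/- Let n be a nonnegative integer. The equation x² + 3y² = 12n+4 has an integer solution if and only if for every prime p with p ≡ 2 (mod 3), the p-adic valuation ν_p(3n+1) is even. -/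
/-!
The numbers `a² + ab + b²`, norms of Eisenstein integers, are exactly the `m` with
`4m = x² + 3y²` (take `x = 2a + b`, `y = b`), and they form a multiplicative monoid.

The polynomial `t² + t + 1` has a root modulo a prime `p` iff `p ≢ 2 (mod 3)`, a root being a
primitive cube root of unity. For such a root `w`, pigeonhole gives a nonzero pair `(x, y)` with
`|x|, |y| ≤ √p` and `x ≡ w y (mod p)`; then `x² + xy + y²` is a multiple of `p` below `3p`, and
`2p` is excluded by parity, so `p` is a norm. As `p² = p² + p·0 + 0²` for every `p`, each `m` in
which the primes `p ≡ 2 (mod 3)` occur to even powers is a norm.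

Conversely, a prime `p ≡ 2 (mod 3)` dividing `a² + ab + b²` divides `a` and `b` (otherwise `a/b`
would be a root of `t² + t + 1`), so descent by `p²` shows that its exponent in a norm is even.
-/

theorem ZMod.exists_sq_add_self_add_one_eq_zero_iff {p : ℕ} [Fact p.Prime] :
    (∃ t : ZMod p, t ^ 2 + t + 1 = 0) ↔ p % 3 ≠ 2 := by
  have hp := (Fact.out : p.Prime)
  constructor
  · rintro ⟨t, ht⟩ hp2
    have ht0 : t ≠ 0 := by rintro rfl; simp at ht
    have ht1 : t ≠ 1 := by
      rintro rfl
      have h3 : ((3 : ℕ) : ZMod p) = 0 := by push_cast; linear_combination ht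
      rw [ZMod.natCast_eq_zero_iff, Nat.dvd_prime Nat.prime_three] at h3
      omega
    have hord : orderOf t = 3 := orderOf_eq_prime (by linear_combination (t - 1) * ht) ht1
    have := ZMod.orderOf_dvd_card_sub_one ht0
    rw [hord] at this
    omega
  · intro hp2
    rcases (by omega : p % 3 = 0 ∨ p % 3 = 1) with h0 | h1
    · obtain rfl : 3 = p := ((Nat.dvd_prime hp).mp (Nat.dvd_of_mod_eq_zero h0)).resolve_left
        (by norm_num)
      exact ⟨1, rfl⟩
    · obtain ⟨u, hu⟩ := exists_prime_orderOf_dvd_card 3 (G := (ZMod p)ˣ)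
        (by rw [ZMod.card_units]; have := hp.two_le; omega)
      have hζ : IsPrimitiveRoot (u : ZMod p) 3 :=
        IsPrimitiveRoot.coe_units_iff.mpr (hu ▸ IsPrimitiveRoot.orderOf u)
      have hsum := hζ.geom_sum_eq_zero (by norm_num)
      simp only [Finset.sum_range_succ, Finset.sum_range_zero] at hsum
      exact ⟨u, by linear_combination hsum⟩

theorem Int.dvd_and_dvd_of_dvd_sq_add_mul_add_sq {p : ℕ} (hp : p.Prime) (hp2 : p % 3 = 2)
    {a b : ℤ} (h : (p : ℤ) ∣ a ^ 2 + a * b + b ^ 2) : (p : ℤ) ∣ a ∧ (p : ℤ) ∣ b := by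
  have := Fact.mk hp
  simp only [← ZMod.intCast_zmod_eq_zero_iff_dvd] at h ⊢
  push_cast at h
  have hb : (b : ZMod p) = 0 := by
    by_contra hb
    refine ZMod.exists_sq_add_self_add_one_eq_zero_iff.mp ⟨(a : ZMod p) / (b : ZMod p), ?_⟩ hp2
    field_simp
    linear_combination h
  rw [hb] at h
  exact ⟨pow_eq_zero_iff two_ne_zero |>.mp (by linear_combination h), hb⟩

theorem ZMod.exists_ne_zero_abs_le_sqrt_intCast_eq_mul (p : ℕ) [NeZero p] (w : ZMod p) :
    ∃ x y : ℤ, (x ≠ 0 ∨ y ≠ 0) ∧ |x| ≤ p.sqrt ∧ |y| ≤ p.sqrt ∧ (x : ZMod p) = w * y := by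
  set s : ℤ := (p.sqrt : ℤ)
  set B := Finset.Icc 0 s ×ˢ Finset.Icc 0 s
  have hcard : (Finset.univ : Finset (ZMod p)).card < B.card := by
    have := Nat.lt_succ_sqrt p
    simp only [Finset.card_univ, ZMod.card, B, Finset.card_product, Int.card_Icc, sub_zero, s]
    exact_mod_cast this
  obtain ⟨⟨i₁, j₁⟩, h₁, ⟨i₂, j₂⟩, h₂, hne, heq⟩ :=
    Finset.exists_ne_map_eq_of_card_lt_of_maps_to hcard
      (f := fun q : ℤ × ℤ => (q.1 : ZMod p) - w * q.2)
      fun _ _ => Finset.mem_coe.2 (Finset.mem_univ _)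
  simp only [B, Finset.mem_product, Finset.mem_Icc] at h₁ h₂
  refine ⟨i₁ - i₂, j₁ - j₂, ?_, abs_le.2 ⟨by omega, by omega⟩, abs_le.2 ⟨by omega, by omega⟩, ?_⟩
  · by_contra! h0
    exact hne (Prod.ext (by omega) (by omega))
  · push_cast
    linear_combination heq

def loeschian : Submonoid ℕ where
  carrier := {m | ∃ a b : ℤ, a ^ 2 + a * b + b ^ 2 = m}
  one_mem' := ⟨1, 0, by norm_num⟩
  -- multiplicativity of the norm `N(a - bω)` on `ℤ[ω]`
  mul_mem' := by
    rintro m n ⟨a, b, hab⟩ ⟨c, d, hcd⟩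
    exact ⟨a * c - b * d, a * d + b * c + b * d, by push_cast; rw [← hab, ← hcd]; ring⟩

theorem mem_loeschian {m : ℕ} : m ∈ loeschian ↔ ∃ a b : ℤ, a ^ 2 + a * b + b ^ 2 = m := Iff.rfl

theorem Nat.Prime.mem_loeschian {p : ℕ} (hp : p.Prime) (hp2 : p % 3 ≠ 2) : p ∈ loeschian := by
  have := Fact.mk hp
  obtain ⟨w, hw⟩ := ZMod.exists_sq_add_self_add_one_eq_zero_iff.mpr hp2
  obtain ⟨x, y, hxy0, hx, hy, hxy⟩ := ZMod.exists_ne_zero_abs_le_sqrt_intCast_eq_mul p w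
  have hs : (p.sqrt : ℤ) ^ 2 < p := by
    exact_mod_cast (Nat.sqrt_le' p).lt_of_ne fun h => hp.not_isSquare ⟨p.sqrt, by rw [← sq, h]⟩
  have hpos : 0 < x ^ 2 + x * y + y ^ 2 := by
    rcases hxy0 with h | h <;> nlinarith [sq_pos_of_ne_zero h, sq_nonneg (x + y)]
  have hlt : x ^ 2 + x * y + y ^ 2 < 3 * p := by
    have hx2 := sq_le_sq' (abs_le.1 hx).1 (abs_le.1 hx).2
    have hy2 := sq_le_sq' (abs_le.1 hy).1 (abs_le.1 hy).2
    nlinarith [sq_nonneg (x - y)]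
  obtain ⟨k, hk⟩ : (p : ℤ) ∣ x ^ 2 + x * y + y ^ 2 := by
    rw [← ZMod.intCast_zmod_eq_zero_iff_dvd]
    push_cast
    rw [hxy]
    linear_combination y ^ 2 * hw
  have hp0 : (0 : ℤ) < p := by exact_mod_cast hp.pos
  obtain rfl | rfl : k = 1 ∨ k = 2 := by
    have : 0 < k := pos_of_mul_pos_right (hk ▸ hpos) hp0.le
    have : k < 3 := lt_of_mul_lt_mul_left (by linarith) hp0.le
    omega
  · exact ⟨x, y, by rw [hk, mul_one]⟩
  · obtain ⟨⟨x', rfl⟩, ⟨y', rfl⟩⟩ :=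
      Int.dvd_and_dvd_of_dvd_sq_add_mul_add_sq Nat.prime_two (by norm_num)
        ⟨p, by rw [hk]; push_cast; ring⟩
    have h2p : 2 ∣ p :=
      Int.natCast_dvd_natCast.mp ⟨x' ^ 2 + x' * y' + y' ^ 2, by push_cast at hk ⊢; linarith⟩
    obtain rfl := ((Nat.dvd_prime hp).mp h2p).resolve_left (by norm_num)
    norm_num at hp2

theorem exists_mem_loeschian_eq_sq_mul {p m : ℕ} (hp : p.Prime) (hp2 : p % 3 = 2)
    (hm : m ∈ loeschian) (hpm : p ∣ m) : ∃ M ∈ loeschian, m = p ^ 2 * M := by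
  obtain ⟨a, b, hab⟩ := hm
  obtain ⟨⟨a', rfl⟩, ⟨b', rfl⟩⟩ := Int.dvd_and_dvd_of_dvd_sq_add_mul_add_sq hp hp2
    (hab ▸ Int.natCast_dvd_natCast.mpr hpm)
  obtain ⟨M, rfl⟩ : p ^ 2 ∣ m :=
    Int.natCast_dvd_natCast.mp ⟨a' ^ 2 + a' * b' + b' ^ 2, by push_cast; rw [← hab]; ring⟩
  have hp0 : (p : ℤ) ^ 2 ≠ 0 := pow_ne_zero 2 (Int.natCast_ne_zero.mpr hp.ne_zero)
  refine ⟨M, ⟨a', b', mul_left_cancel₀ hp0 ?_⟩, rfl⟩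
  push_cast at hab
  linear_combination hab

theorem even_factorization_of_mem_loeschian {p m : ℕ} (hp : p.Prime) (hp2 : p % 3 = 2)
    (hm : m ∈ loeschian) : Even (m.factorization p) := by
  induction m using Nat.strong_induction_on with
  | _ m ih =>
    by_cases hpm : p ∣ m
    · rcases eq_or_ne m 0 with rfl | hm0
      · simp
      obtain ⟨M, hM, rfl⟩ := exists_mem_loeschian_eq_sq_mul hp hp2 hm hpm
      have hM0 : M ≠ 0 := right_ne_zero_of_mul hm0
      rw [Nat.factorization_mul (pow_ne_zero 2 hp.ne_zero) hM0, Finsupp.add_apply,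
        hp.factorization_pow, Finsupp.single_eq_same]
      exact even_two.add <|
        ih M (lt_mul_left (Nat.pos_of_ne_zero hM0) (Nat.one_lt_pow two_ne_zero hp.one_lt)) hM
    · simp [Nat.factorization_eq_zero_of_not_dvd hpm]

theorem mem_loeschian_of_even_factorization {m : ℕ} (hm : m ≠ 0)
    (h : ∀ p : ℕ, p.Prime → p % 3 = 2 → Even (m.factorization p)) : m ∈ loeschian := by
  rw [← Nat.prod_factorization_pow_eq_self hm]
  refine SubmonoidClass.finsuppProd_mem _ _ _ fun p hp => ?_
  have hp' : p.Prime := Nat.prime_of_mem_primeFactors (Finsupp.mem_support_iff.2 hp)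
  by_cases hp2 : p % 3 = 2
  · obtain ⟨k, hk⟩ := h p hp' hp2
    rw [hk, ← two_mul, pow_mul]
    exact pow_mem (mem_loeschian.2 ⟨p, 0, by push_cast; ring⟩) k
  · exact pow_mem (hp'.mem_loeschian hp2) _

theorem mem_loeschian_iff (m : ℕ) :
    m ∈ loeschian ↔ ∀ p : ℕ, p.Prime → p % 3 = 2 → Even (m.factorization p) := by
  refine ⟨fun hm p hp hp2 => even_factorization_of_mem_loeschian hp hp2 hm, fun h => ?_⟩
  rcases eq_or_ne m 0 with rfl | hm
  · exact ⟨0, 0, by simp⟩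
  · exact mem_loeschian_of_even_factorization hm h

theorem exists_sq_add_three_mul_sq_eq_four_mul_iff (m : ℕ) :
    (∃ x y : ℤ, x ^ 2 + 3 * y ^ 2 = 4 * m) ↔ m ∈ loeschian := by
  constructor
  · rintro ⟨x, y, h⟩
    obtain ⟨c, hc⟩ : Even (x + y) :=
      (Int.even_pow' two_ne_zero).mp ⟨2 * m + x * y - y ^ 2, by linear_combination h⟩
    refine ⟨c, -y, ?_⟩
    have : 4 * (c ^ 2 + c * -y + (-y) ^ 2) = 4 * m := by
      rw [← h, show x = c + c - y by omega]
      ring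
    omega
  · rintro ⟨a, b, h⟩
    exact ⟨2 * a + b, b, by rw [← h]; ring⟩

theorem stmt9 (n : ℕ) :
    (∃ x y : ℤ, x ^ 2 + 3 * y ^ 2 = 12 * n + 4) ↔
      ∀ p : ℕ, p.Prime → p % 3 = 2 → Even ((3 * n + 1).factorization p) := by
  have h : (12 * n + 4 : ℤ) = 4 * ((3 * n + 1 : ℕ) : ℤ) := by push_cast; ring
  rw [h, exists_sq_add_three_mul_sq_eq_four_mul_iff, mem_loeschian_iff]
end

section
/- Let n be a nonnegative integer and let K be the third cyclotomic field ℚ(ζ₃) (whose ring of integers is the ring of Eisenstein integers ℤ[ζ₃]). Then the number of ideals of the ring of integers of K with absolute norm 3n+1 equals the number of 3-core partitions of n, i.e. equals |C_n|. -/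
open NumberField

/-- The third cyclotomic field `ℚ(ζ₃)` is a number field; its ring of integers is
the ring of Eisenstein integers `ℤ[ζ₃]`. -/
noncomputable instance : NumberField (CyclotomicField 3 ℚ) :=
  inferInstance

section Coordinates

variable {R : Type*} [CommRing R]

def eisensteinNorm (p : R × R) : R := p.1 ^ 2 - p.1 * p.2 + p.2 ^ 2

/-- Multiplication by `-ω` in the coordinates `(x, y)` of `x + yω`. -/
def eisensteinRotate (p : R × R) : R × R := (p.2, p.2 - p.1)

lemma eisensteinNorm_nonneg (p : ℤ × ℤ) : 0 ≤ eisensteinNorm p := by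
  unfold eisensteinNorm
  nlinarith [sq_nonneg (p.1 - p.2), sq_nonneg p.1, sq_nonneg p.2]

lemma isPeriodicPt_eisensteinRotate (p : R × R) :
    Function.IsPeriodicPt eisensteinRotate 6 p := by
  simp [Function.IsPeriodicPt, Function.IsFixedPt, eisensteinRotate]

lemma semiconj_eisensteinRotate {S : Type*} [CommRing S] (f : R →+* S) :
    Function.Semiconj (Prod.map f f) eisensteinRotate eisensteinRotate := by
  intro p
  simp [eisensteinRotate]

end Coordinates

abbrev eisensteinModThree : ℤ × ℤ → ZMod 3 × ZMod 3 :=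
  Prod.map (Int.castRingHom _) (Int.castRingHom _)

lemma eisensteinModThree_eq_one_iff (q : ℤ × ℤ) :
    eisensteinModThree q = 1 ↔ q.1 % 3 = 1 ∧ q.2 % 3 = 1 := by
  have h (a : ℤ) : (a : ZMod 3) = 1 ↔ a % 3 = 1 := by
    simpa using ZMod.intCast_eq_intCast_iff' a 1 3
  simp [Prod.ext_iff, h]

lemma exists_eisensteinRotate_iterate_eq_one :
    ∀ r : ZMod 3 × ZMod 3, eisensteinNorm r = 1 → ∃ k < 6, eisensteinRotate^[k] r = 1 := by
  decide

lemma eisensteinRotate_iterate_one_eq_one :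
    ∀ k < 6, eisensteinRotate^[k] (1 : ZMod 3 × ZMod 3) = 1 → k = 0 := by
  decide

lemma eisensteinModThree_eisensteinRotate_iterate (p : ℤ × ℤ) (k : ℕ) :
    eisensteinModThree (eisensteinRotate^[k] p) = eisensteinRotate^[k] (eisensteinModThree p) :=
  (semiconj_eisensteinRotate _).iterate_right k p

lemma exists_eisensteinModThree_eisensteinRotate_iterate_eq_one {p : ℤ × ℤ}
    (hp : ((eisensteinNorm p : ℤ) : ZMod 3) = 1) :
    ∃ k, eisensteinModThree (eisensteinRotate^[k] p) = 1 := by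
  obtain ⟨k, -, hk⟩ := exists_eisensteinRotate_iterate_eq_one (eisensteinModThree p)
    (by simpa [eisensteinNorm] using hp)
  exact ⟨k, by rw [eisensteinModThree_eisensteinRotate_iterate, hk]⟩

lemma eisensteinRotate_iterate_eq_self {p : ℤ × ℤ} {k : ℕ} (hp : eisensteinModThree p = 1)
    (hk : eisensteinModThree (eisensteinRotate^[k] p) = 1) : eisensteinRotate^[k] p = p := by
  have periodic := isPeriodicPt_eisensteinRotate p
  rw [← periodic.iterate_mod_apply] at hk ⊢
  rw [eisensteinModThree_eisensteinRotate_iterate, hp] at hk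
  rw [eisensteinRotate_iterate_one_eq_one _ (Nat.mod_lt _ (by norm_num)) hk]
  rfl

namespace IsPrimitiveRoot

variable {K : Type*} [Field K] {ζ : K} (hζ : IsPrimitiveRoot ζ 3)

local notation "ω" => hζ.toInteger

noncomputable def eisenstein (p : ℤ × ℤ) : 𝓞 K := p.1 + p.2 * ω

lemma toInteger_sq_add_toInteger_add_one : ω ^ 2 + ω + 1 = 0 :=
  IsCyclotomicExtension.Rat.Three.eta_sq_add_eta_add_one hζ

lemma eisenstein_mul_toInteger (p : ℤ × ℤ) :
    hζ.eisenstein p * ω = hζ.eisenstein (-p.2, p.1 - p.2) := by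
  simp only [eisenstein]
  push_cast
  linear_combination (p.2 : 𝓞 K) * hζ.toInteger_sq_add_toInteger_add_one

lemma eisenstein_mul_neg_toInteger (p : ℤ × ℤ) :
    hζ.eisenstein p * -ω = hζ.eisenstein (eisensteinRotate p) := by
  simp only [eisenstein, eisensteinRotate]
  push_cast
  linear_combination (-p.2 : 𝓞 K) * hζ.toInteger_sq_add_toInteger_add_one

lemma eisenstein_mul_neg_toInteger_pow (p : ℤ × ℤ) (k : ℕ) :
    hζ.eisenstein p * (-ω) ^ k = hζ.eisenstein (eisensteinRotate^[k] p) := by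
  induction k generalizing p with
  | zero => simp
  | succ k ih =>
    rw [pow_succ', ← mul_assoc, eisenstein_mul_neg_toInteger, ih, Function.iterate_succ_apply]

lemma isUnit_neg_toInteger : IsUnit (-ω) :=
  (hζ.toInteger_isPrimitiveRoot.isUnit (by norm_num)).neg

section Basis

variable [CharZero K] [IsCyclotomicExtension {3} ℚ K]

noncomputable def eisensteinBasis : Module.Basis (Fin 2) ℤ (𝓞 K) :=
  hζ.integralPowerBasis.basis.reindex (finCongr (by rw [integralPowerBasis_dim]; rfl))

lemma eisensteinBasis_apply (i : Fin 2) : hζ.eisensteinBasis i = ω ^ (i : ℕ) := by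
  simp [eisensteinBasis, integralPowerBasis_gen]

lemma eisenstein_eq_equivFun_symm (p : ℤ × ℤ) :
    hζ.eisenstein p = hζ.eisensteinBasis.equivFun.symm ![p.1, p.2] := by
  simp [Module.Basis.equivFun_symm_apply, Fin.sum_univ_two, eisensteinBasis_apply, eisenstein]

lemma eisenstein_bijective : Function.Bijective hζ.eisenstein := by
  have : hζ.eisenstein = hζ.eisensteinBasis.equivFun.symm ∘ (finTwoArrowEquiv ℤ).symm := by
    ext1 p
    exact hζ.eisenstein_eq_equivFun_symm p
  rw [this]
  exact hζ.eisensteinBasis.equivFun.symm.bijective.comp (finTwoArrowEquiv ℤ).symm.bijective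

lemma eisensteinBasis_repr (p : ℤ × ℤ) (i : Fin 2) :
    hζ.eisensteinBasis.repr (hζ.eisenstein p) i = ![p.1, p.2] i := by
  rw [← hζ.eisensteinBasis.equivFun_apply, eisenstein_eq_equivFun_symm,
    LinearEquiv.apply_symm_apply]

lemma norm_eisenstein (p : ℤ × ℤ) :
    Algebra.norm ℤ (hζ.eisenstein p) = eisensteinNorm p := by
  rw [Algebra.norm_eq_matrix_det hζ.eisensteinBasis, Matrix.det_fin_two]
  simp only [Algebra.leftMulMatrix_eq_repr_mul, eisensteinBasis_apply, Fin.val_zero, Fin.val_one,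
    pow_zero, mul_one, pow_one, eisenstein_mul_toInteger, eisensteinBasis_repr,
    Matrix.cons_val_zero, Matrix.cons_val_one, Matrix.cons_val_fin_one, eisensteinNorm]
  ring

end Basis

variable [NumberField K] [IsCyclotomicExtension {3} ℚ K]

lemma exists_unit_eq_neg_toInteger_pow (u : (𝓞 K)ˣ) : ∃ k : ℕ, (u : 𝓞 K) = (-ω) ^ k := by
  have hω3 := hζ.toInteger_cube_eq_one
  have hu := IsCyclotomicExtension.Rat.Three.Units.mem hζ u
  fin_cases hu <;>
    simp only [Units.val_one, Units.val_neg, Units.val_pow_eq_pow_val, IsUnit.unit_spec]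
  · exact ⟨0, by simp⟩
  · exact ⟨3, by linear_combination hω3⟩
  · exact ⟨4, by linear_combination (-ω) * hω3⟩
  · exact ⟨1, by ring⟩
  · exact ⟨2, by ring⟩
  · exact ⟨5, by linear_combination ω ^ 2 * hω3⟩

lemma associated_eisenstein_iff {p q : ℤ × ℤ} :
    Associated (hζ.eisenstein p) (hζ.eisenstein q) ↔ ∃ k, eisensteinRotate^[k] p = q := by
  constructor
  · rintro ⟨u, hu⟩
    obtain ⟨k, hk⟩ := hζ.exists_unit_eq_neg_toInteger_pow u
    rw [hk, eisenstein_mul_neg_toInteger_pow] at hu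
    exact ⟨k, hζ.eisenstein_bijective.injective hu⟩
  · rintro ⟨k, rfl⟩
    exact ⟨(hζ.isUnit_neg_toInteger.pow k).unit, hζ.eisenstein_mul_neg_toInteger_pow p k⟩

lemma absNorm_span_eisenstein (p : ℤ × ℤ) :
    (Ideal.absNorm (Ideal.span {hζ.eisenstein p}) : ℤ) = eisensteinNorm p := by
  rw [Ideal.absNorm_span_singleton, norm_eisenstein, Int.natCast_natAbs,
    abs_of_nonneg (eisensteinNorm_nonneg p)]

lemma injOn_span_eisenstein :
    Set.InjOn (fun p ↦ Ideal.span {hζ.eisenstein p}) {p | eisensteinModThree p = 1} := by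
  intro p hp q hq hpq
  obtain ⟨k, rfl⟩ :=
    hζ.associated_eisenstein_iff.mp (Ideal.span_singleton_eq_span_singleton.mp hpq)
  exact (eisensteinRotate_iterate_eq_self hp hq).symm

lemma exists_eisensteinModThree_eq_one_span_eisenstein_eq {I : Ideal (𝓞 K)}
    (hI : Ideal.absNorm I % 3 = 1) :
    ∃ p, eisensteinModThree p = 1 ∧ Ideal.span {hζ.eisenstein p} = I := by
  have := IsCyclotomicExtension.Rat.three_pid K
  obtain ⟨z, hz⟩ := (IsPrincipalIdealRing.principal I).principal
  rw [Ideal.submodule_span_eq] at hz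
  obtain ⟨p, rfl⟩ := hζ.eisenstein_bijective.surjective z
  subst hz
  have hp : ((eisensteinNorm p : ℤ) : ZMod 3) = 1 := by
    rw [← hζ.absNorm_span_eisenstein, Int.cast_natCast, ← ZMod.natCast_mod, hI, Nat.cast_one]
  obtain ⟨k, hk⟩ := exists_eisensteinModThree_eisensteinRotate_iterate_eq_one hp
  exact ⟨_, hk, Ideal.span_singleton_eq_span_singleton.mpr
    (hζ.associated_eisenstein_iff.mpr ⟨k, rfl⟩).symm⟩

end IsPrimitiveRoot

theorem IsCyclotomicExtension.Rat.Three.ncard_setOf_absNorm_eq {K : Type*} [Field K]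
    [NumberField K] [IsCyclotomicExtension {3} ℚ K] {N : ℕ} (hN : N % 3 = 1) :
    {I : Ideal (𝓞 K) | Ideal.absNorm I = N}.ncard =
      {p : ℤ × ℤ | eisensteinModThree p = 1 ∧ eisensteinNorm p = N}.ncard := by
  have hζ := zeta_spec 3 ℚ K
  have himage : (fun p ↦ Ideal.span {hζ.eisenstein p}) ''
      {p : ℤ × ℤ | eisensteinModThree p = 1 ∧ eisensteinNorm p = N} =
        {I | Ideal.absNorm I = N} := by
    ext I
    constructor
    · rintro ⟨p, ⟨-, hpN⟩, rfl⟩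
      exact_mod_cast (hζ.absNorm_span_eisenstein p).trans hpN
    · intro hI
      obtain ⟨p, hp, hpI⟩ := hζ.exists_eisensteinModThree_eq_one_span_eisenstein_eq (hI ▸ hN)
      refine ⟨p, ⟨hp, ?_⟩, hpI⟩
      rw [← hζ.absNorm_span_eisenstein, hpI, show Ideal.absNorm I = N from hI]
  rw [← himage, Set.InjOn.ncard_image (hζ.injOn_span_eisenstein.mono fun _ hp ↦ hp.1)]

def eisensteinOfCore (p : ℤ × ℤ) : ℤ × ℤ := (3 * (p.1 + p.2) + 1, 3 * p.2 + 1)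

lemma eisensteinOfCore_injective : Function.Injective eisensteinOfCore := by
  intro p q h
  simp only [eisensteinOfCore, Prod.mk.injEq] at h
  ext <;> omega

lemma mem_C_iff_eisensteinNorm_eisensteinOfCore {n : ℤ} {p : ℤ × ℤ} :
    p ∈ C n ↔ eisensteinNorm (eisensteinOfCore p) = 3 * n + 1 := by
  have h : eisensteinNorm (eisensteinOfCore p) =
      3 * (3 * p.1 ^ 2 + 3 * p.1 * p.2 + 3 * p.2 ^ 2 + p.1 + 2 * p.2) + 1 := by
    simp only [eisensteinNorm, eisensteinOfCore]
    ring
  rw [h]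
  exact ⟨fun hp ↦ by rw [hp], fun hp ↦ by simp only [C, Set.mem_ofPred_eq]; omega⟩

lemma image_eisensteinOfCore_C (n : ℤ) :
    eisensteinOfCore '' C n = {q | eisensteinModThree q = 1 ∧ eisensteinNorm q = 3 * n + 1} := by
  ext q
  simp only [Set.mem_image, Set.mem_ofPred_eq, eisensteinModThree_eq_one_iff]
  constructor
  · rintro ⟨p, hp, rfl⟩
    exact ⟨by simp only [eisensteinOfCore]; omega,
      mem_C_iff_eisensteinNorm_eisensteinOfCore.mp hp⟩
  · rintro ⟨hq, hqn⟩
    obtain ⟨p, rfl⟩ : ∃ p, eisensteinOfCore p = q :=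
      ⟨((q.1 - q.2) / 3, (q.2 - 1) / 3), by simp only [eisensteinOfCore]; ext <;> omega⟩
    exact ⟨p, mem_C_iff_eisensteinNorm_eisensteinOfCore.mpr hqn, rfl⟩

theorem stmt11 (n : ℕ) :
    {I : Ideal (𝓞 (CyclotomicField 3 ℚ)) | Ideal.absNorm I = 3 * n + 1}.ncard =
      (C (n : ℤ)).ncard := by
  have : IsCyclotomicExtension {3} ℚ (CyclotomicField 3 ℚ) :=
    CyclotomicField.isCyclotomicExtension 3 ℚ
  rw [IsCyclotomicExtension.Rat.Three.ncard_setOf_absNorm_eq (by omega),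
    ← Set.ncard_image_of_injective (C n) eisensteinOfCore_injective, image_eisensteinOfCore_C]
  push_cast
  rfl
end

section
/- Let n be a nonnegative integer and let k be a perfect square not divisible by 3 having no prime factor p ≡ 1 (mod 3). Then a₃(kn + (k−1)/3) = a₃(n), i.e. |C_{kn+(k−1)/3}| = |C_n|. -/
/-!
Writing `a = 3x` and `b = 3y + 1`, the equation of `C n` becomes `a² + ab + b² = 3n + 1` with
`a ≡ 0` and `b ≡ 1 (mod 3)`. Choose a square root `s ≡ 1 (mod 3)` of `k` (up to sign). Multiplying
`(a, b)` by `s` keeps both congruences and multiplies the norm form by `k`, so it maps `C n`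
injectively into `C (kn + (k - 1)/3)`. It is onto because primes `p ≡ 2 (mod 3)` are inert in
`ℤ[ω]`: from `p ∣ a² + ab + b²` we get `p ∣ a` and `p ∣ b`, so `s² ∣ a² + ab + b²` forces `s ∣ a`
and `s ∣ b`.
-/

theorem Int.prime_dvd_of_dvd_sq_add_mul_add_sq {p : ℕ} (hp : p.Prime) (hp3 : p % 3 = 2)
    {a b : ℤ} (h : (p : ℤ) ∣ a ^ 2 + a * b + b ^ 2) : (p : ℤ) ∣ b := by
  have := Fact.mk hp
  rw [← ZMod.intCast_zmod_eq_zero_iff_dvd] at h ⊢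
  push_cast at h
  by_contra hb
  -- `a / b` would be a primitive cube root of unity in `ZMod p`, forcing `3 ∣ p - 1`
  set x : ZMod p := a / b
  have hx : x ^ 2 + x + 1 = 0 := by
    have : (x ^ 2 + x + 1) * (b : ZMod p) ^ 2 = 0 := by
      simp only [x]; field_simp; linear_combination h
    simpa [hb] using this
  have hx1 : x ≠ 1 := by
    intro hx1
    rw [hx1] at hx
    have h3 : ((3 : ℕ) : ZMod p) = 0 := by push_cast; linear_combination hx
    rw [ZMod.natCast_eq_zero_iff, Nat.prime_dvd_prime_iff_eq hp Nat.prime_three] at h3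
    omega
  have hord : orderOf x = 3 := orderOf_eq_prime (by linear_combination (x - 1) * hx) hx1
  have hx0 : x ≠ 0 := by rintro hx0; simp [hx0] at hx
  have := hord ▸ ZMod.orderOf_dvd_card_sub_one hx0
  omega

theorem Int.dvd_of_sq_dvd_sq_add_mul_add_sq {m : ℕ} (hm : ∀ p : ℕ, p.Prime → p ∣ m → p % 3 = 2)
    {a b : ℤ} (h : (m : ℤ) ^ 2 ∣ a ^ 2 + a * b + b ^ 2) : (m : ℤ) ∣ a ∧ (m : ℤ) ∣ b := by
  induction m using UniqueFactorizationMonoid.induction_on_prime generalizing a b with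
  | h₁ => simpa using hm 3 Nat.prime_three (dvd_zero 3)
  | h₂ u hu => simp [Nat.isUnit_iff.mp hu]
  | h₃ m p _ hp ih =>
    have hp := Nat.prime_iff.mpr hp
    have hp3 := hm p hp (dvd_mul_right p m)
    have hpQ : (p : ℤ) ∣ a ^ 2 + a * b + b ^ 2 :=
      (Dvd.intro ((p : ℤ) * m ^ 2) (by push_cast; ring)).trans h
    have hpb := prime_dvd_of_dvd_sq_add_mul_add_sq hp hp3 hpQ
    have hpa := prime_dvd_of_dvd_sq_add_mul_add_sq hp hp3 (a := b) (b := a)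
      (by convert hpQ using 1; ring)
    obtain ⟨a, rfl⟩ := hpa
    obtain ⟨b, rfl⟩ := hpb
    have hp0 : (p : ℤ) ^ 2 ≠ 0 := pow_ne_zero 2 (by exact_mod_cast hp.ne_zero)
    have h' : (p : ℤ) ^ 2 * m ^ 2 ∣ (p : ℤ) ^ 2 * (a ^ 2 + a * b + b ^ 2) := by
      convert h using 1 <;> push_cast <;> ring
    obtain ⟨ha, hb⟩ := ih (fun q hq hqm => hm q hq (hqm.mul_left p))
      ((mul_dvd_mul_iff_left hp0).mp h')
    push_cast
    exact ⟨mul_dvd_mul_left _ ha, mul_dvd_mul_left _ hb⟩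

theorem mem_C_iff {n x y : ℤ} :
    (x, y) ∈ C n ↔ (3 * x) ^ 2 + 3 * x * (3 * y + 1) + (3 * y + 1) ^ 2 = 3 * n + 1 := by
  simp only [C, Set.mem_ofPred_eq]
  constructor <;> intro h <;> linarith

section Scaling

variable (t : ℤ) {n N : ℤ}

/-- Multiplication of `(3x, 3y + 1)` by `3t + 1`, read back in the coordinates `(x, y)`. -/
def scaleC (p : ℤ × ℤ) : ℤ × ℤ :=
  ((3 * t + 1) * p.1, (3 * t + 1) * p.2 + t)

theorem mapsTo_scaleC (hN : 3 * N + 1 = (3 * t + 1) ^ 2 * (3 * n + 1)) :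
    Set.MapsTo (scaleC t) (C n) (C N) := by
  rintro ⟨x, y⟩ hxy
  rw [mem_C_iff] at hxy
  rw [scaleC, mem_C_iff, hN, ← hxy]
  ring

theorem injective_scaleC : Function.Injective (scaleC t) := by
  have hs : 3 * t + 1 ≠ 0 := by omega
  rintro ⟨x₁, y₁⟩ ⟨x₂, y₂⟩ h
  simp only [scaleC, Prod.mk.injEq, add_left_inj, mul_right_inj' hs] at h
  rw [h.1, h.2]

theorem surjOn_scaleC (hN : 3 * N + 1 = (3 * t + 1) ^ 2 * (3 * n + 1))
    (hs : ∀ p : ℕ, p.Prime → p ∣ (3 * t + 1).natAbs → p % 3 = 2) :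
    Set.SurjOn (scaleC t) (C n) (C N) := by
  rintro ⟨x', y'⟩ hxy
  rw [mem_C_iff, hN] at hxy
  obtain ⟨ha, hb⟩ := Int.dvd_of_sq_dvd_sq_add_mul_add_sq hs
    (a := 3 * x') (b := 3 * y' + 1) (by rw [Int.natAbs_sq, hxy]; exact dvd_mul_right _ _)
  rw [Int.natAbs_dvd] at ha hb
  obtain ⟨x, rfl⟩ := (show IsCoprime (3 * t + 1) 3 from ⟨1, -t, by ring⟩).dvd_of_dvd_mul_left ha
  obtain ⟨c, hc⟩ := hb
  -- `c ≡ 1 (mod 3)` because `3 * t + 1 ≡ 1` and `3 * y' + 1 ≡ 1`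
  set y := y' - t * c with hy
  have hcy : c = 3 * y + 1 := by linear_combination -hc - 3 * hy
  refine ⟨(x, y), ?_, ?_⟩
  · rw [mem_C_iff]
    refine mul_left_cancel₀ (pow_ne_zero 2 (show 3 * t + 1 ≠ 0 by omega)) ?_
    rw [← hxy, hc, hcy]
    ring
  · simp only [scaleC, Prod.mk.injEq, true_and]
    linear_combination t * hc + (3 * t + 1) * hy

theorem ncard_C_eq_of_sq_mul (hN : 3 * N + 1 = (3 * t + 1) ^ 2 * (3 * n + 1))
    (hs : ∀ p : ℕ, p.Prime → p ∣ (3 * t + 1).natAbs → p % 3 = 2) :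
    (C N).ncard = (C n).ncard :=
  (Set.BijOn.mk (mapsTo_scaleC t hN) (injective_scaleC t).injOn
    (surjOn_scaleC t hN hs)).ncard_eq.symm

end Scaling

theorem stmt13 (n k : ℕ) (hsq : ∃ m : ℕ, k = m ^ 2) (hk3 : ¬ 3 ∣ k)
    (hk1 : ∀ p : ℕ, p.Prime → p ∣ k → p % 3 ≠ 1) :
    (C ((k * n + (k - 1) / 3 : ℕ) : ℤ)).ncard = (C (n : ℤ)).ncard := by
  obtain ⟨m, rfl⟩ := hsq
  have hm3 : m % 3 ≠ 0 := fun h => hk3 (dvd_pow (Nat.dvd_of_mod_eq_zero h) two_ne_zero)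
  obtain ⟨t, ht⟩ : ∃ t : ℤ, (3 * t + 1).natAbs = m := by
    rcases (by omega : m % 3 = 1 ∨ m % 3 = 2) with h | h
    · exact ⟨m / 3, by omega⟩
    · exact ⟨-(m / 3 : ℕ) - 1, by omega⟩
  apply ncard_C_eq_of_sq_mul t
  · have hmod : m ^ 2 % 3 = 1 := by
      rcases (by omega : m % 3 = 1 ∨ m % 3 = 2) with h | h <;> simp [Nat.pow_mod, h]
    have hdiv : 3 * ((m ^ 2 - 1) / 3) + 1 = m ^ 2 := by omega
    rw [← Int.natAbs_sq, ht]
    zify at hdiv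
    push_cast
    linear_combination hdiv
  · rw [ht]
    intro p hp hpm
    have hp3 : p ≠ 3 := by rintro rfl; exact hm3 (Nat.mod_eq_zero_of_dvd hpm)
    have : ¬ 3 ∣ p := fun h => hp3 ((Nat.prime_dvd_prime_iff_eq Nat.prime_three hp).mp h).symm
    have := hk1 p hp (dvd_pow hpm two_ne_zero)
    omega
end

section
/- Let n and m be positive integers such that 3n+1 and 3m+1 are coprime. Then a₃(3mn + m + n) = a₃(n) · a₃(m), i.e. |C_{3mn+m+n}| = |C_n| · |C_m|. -/
/-!
Let `ζ` be a primitive sixth root of unity, so `ζ² = ζ - 1` and `N(a + bζ) = a² + ab + b²`.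
Since `3 (3x² + 3xy + 3y² + x + 2y) + 1 = N(3x + 3y + 1 - 3xζ)`, the set `C n` corresponds to the
elements of norm `3n + 1` of the Euclidean ring `ℤ[ζ]` that are `≡ 1 mod 3`. For coprime norms
`N` and `M`, multiplication maps pairs of such elements of norms `N` and `M` bijectively onto
those of norm `NM`: the factors of a product are determined up to units because their norms
are coprime, and the only unit `≡ 1 mod 3` is `1`; conversely an element of norm `NM` divides
`NM` and splits along the coprime factors `N` and `M`, and the factors can be normalised by units.
-/

open scoped QuadraticAlgebra

theorem Int.exists_abs_two_mul_sub_mul_le (c : ℤ) {n : ℤ} (hn : 0 < n) :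
    ∃ q, |2 * (c - q * n)| ≤ n := by
  have hc := Int.emod_add_mul_ediv c n
  have h0 := Int.emod_nonneg c hn.ne'
  have h1 := Int.emod_lt_of_pos c hn
  by_cases h : 2 * (c % n) ≤ n
  · exact ⟨c / n, abs_le.2 ⟨by linarith, by linarith⟩⟩
  · exact ⟨c / n + 1, abs_le.2 ⟨by linarith, by linarith⟩⟩

section OneModDvd

variable {R : Type*} [CommRing R] {k a b : R}

theorem dvd_mul_sub_one (ha : k ∣ a - 1) (hb : k ∣ b - 1) : k ∣ a * b - 1 := by
  rw [show a * b - 1 = a * (b - 1) + (a - 1) by ring]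
  exact dvd_add (dvd_mul_of_dvd_right hb a) ha

theorem dvd_sub_one_of_dvd_mul_sub_one (ha : k ∣ a - 1) (hab : k ∣ a * b - 1) :
    k ∣ b - 1 := by
  rw [show b - 1 = (a * b - 1) - b * (a - 1) by ring]
  exact dvd_sub hab (dvd_mul_of_dvd_right ha b)

end OneModDvd

namespace QuadraticAlgebra

variable {R : Type*} [CommRing R] {a b : R}

theorem isCoprime_of_isCoprime_norm {x y : QuadraticAlgebra R a b}
    (h : IsCoprime x.norm y.norm) : IsCoprime x y := by
  have := h.map (algebraMap R (QuadraticAlgebra R a b))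
  rw [algebraMap_norm_eq_mul_star, algebraMap_norm_eq_mul_star] at this
  exact this.of_mul_left_left.of_mul_right_left

theorem dvd_norm_sub_one {k : R} {z : QuadraticAlgebra R a b}
    (h : algebraMap R _ k ∣ z - 1) : k ∣ z.norm - 1 := by
  rw [← algebraMap_dvd_iff_dvd (a := a) (b := b), map_sub, map_one, algebraMap_norm_eq_mul_star,
    show z * star z - 1 = (z - 1) * star z + star (z - 1) by rw [star_sub, star_one]; ring]
  obtain ⟨c, hc⟩ := h
  refine dvd_add (dvd_mul_of_dvd_left ⟨c, hc⟩ _) ⟨star c, ?_⟩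
  rw [hc, star_mul, mul_comm]
  ext <;> simp

end QuadraticAlgebra

/-- `ℤ[ζ]`, where `⟨a, b⟩` stands for `a + bζ` and `ζ² = -1 + ζ`. -/
abbrev EisensteinInt := QuadraticAlgebra ℤ (-1) 1

namespace EisensteinInt

theorem norm_eq (z : EisensteinInt) : z.norm = z.re ^ 2 + z.re * z.im + z.im ^ 2 := by
  rw [QuadraticAlgebra.norm_def]; ring

theorem norm_nonneg (z : EisensteinInt) : 0 ≤ z.norm := by
  rw [norm_eq]; nlinarith [sq_nonneg (z.re + z.im), sq_nonneg z.re, sq_nonneg z.im]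

theorem norm_eq_zero {z : EisensteinInt} : z.norm = 0 ↔ z = 0 := by
  refine ⟨fun h => ?_, fun h => h ▸ QuadraticAlgebra.norm_zero⟩
  rw [norm_eq] at h
  have hre : z.re = 0 := by nlinarith [sq_nonneg (z.re + z.im), sq_nonneg z.re, sq_nonneg z.im]
  have him : z.im = 0 := by nlinarith [sq_nonneg (z.re + z.im), sq_nonneg z.re, sq_nonneg z.im]
  ext <;> assumption

theorem norm_pos {z : EisensteinInt} (hz : z ≠ 0) : 0 < z.norm :=
  (norm_nonneg z).lt_of_ne (Ne.symm (mt norm_eq_zero.1 hz))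

instance : IsDomain EisensteinInt :=
  have : NoZeroDivisors EisensteinInt := ⟨fun {x y} h => by
    simpa [norm_eq_zero] using congrArg QuadraticAlgebra.norm h⟩
  NoZeroDivisors.to_isDomain _

theorem norm_lt_of_abs_two_mul_le {z : EisensteinInt} {n : ℤ} (hn : 0 < n)
    (hre : |2 * z.re| ≤ n) (him : |2 * z.im| ≤ n) : z.norm < n ^ 2 := by
  rw [norm_eq]
  rw [abs_le] at hre him
  nlinarith [mul_nonneg (sub_nonneg.2 hre.2) (sub_nonneg.2 him.2),
    mul_nonneg (neg_le_iff_add_nonneg.1 hre.1) (neg_le_iff_add_nonneg.1 him.1)]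

theorem exists_norm_sub_mul_lt (x : EisensteinInt) {y : EisensteinInt} (hy : y ≠ 0) :
    ∃ q, (x - q * y).norm < y.norm := by
  have hn := norm_pos hy
  obtain ⟨q₁, h₁⟩ := Int.exists_abs_two_mul_sub_mul_le (x * star y).re hn
  obtain ⟨q₂, h₂⟩ := Int.exists_abs_two_mul_sub_mul_le (x * star y).im hn
  -- `⟨q₁, q₂⟩` rounds `x * star y / norm y` coordinatewise
  refine ⟨⟨q₁, q₂⟩, ?_⟩
  have key : (x - ⟨q₁, q₂⟩ * y) * star y =
      ⟨(x * star y).re - q₁ * y.norm, (x * star y).im - q₂ * y.norm⟩ := by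
    rw [sub_mul, mul_assoc, ← QuadraticAlgebra.algebraMap_norm_eq_mul_star]
    ext <;> simp
  have hlt := norm_lt_of_abs_two_mul_le hn (z := (x - ⟨q₁, q₂⟩ * y) * star y)
    (by rwa [key]) (by rwa [key])
  rw [map_mul, QuadraticAlgebra.norm_star, sq] at hlt
  exact lt_of_mul_lt_mul_right hlt hn.le

noncomputable instance : EuclideanDomain EisensteinInt where
  quotient x y := if hy : y = 0 then 0 else (exists_norm_sub_mul_lt x hy).choose
  quotient_zero _ := dif_pos rfl
  remainder x y := x - y * if hy : y = 0 then 0 else (exists_norm_sub_mul_lt x hy).choose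
  quotient_mul_add_remainder_eq _ _ := add_sub_cancel _ _
  r := InvImage (· < ·) fun z => z.norm.natAbs
  r_wellFounded := (measure _).wf
  remainder_lt x y hy := by
    simp only [InvImage, dif_neg hy, mul_comm y]
    have := (exists_norm_sub_mul_lt x hy).choose_spec
    have := norm_nonneg (x - (exists_norm_sub_mul_lt x hy).choose * y)
    omega
  mul_left_not_lt x y hy := by
    simp only [InvImage, map_mul, Int.natAbs_mul, not_lt]
    exact Nat.le_mul_of_pos_right _ (Int.natAbs_pos.2 (norm_pos hy).ne')

theorem three_dvd_iff {z : EisensteinInt} :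
    (3 : EisensteinInt) ∣ z ↔ 3 ∣ z.re ∧ 3 ∣ z.im :=
  QuadraticAlgebra.algebraMap_dvd_iff

theorem ne_zero_of_three_dvd_sub_one {z : EisensteinInt} (h : (3 : EisensteinInt) ∣ z - 1) :
    z ≠ 0 := by
  rintro rfl
  have := (three_dvd_iff.1 h).1
  norm_num at this

theorem norm_eq_one_of_isUnit {u : EisensteinInt} (hu : IsUnit u) : u.norm = 1 :=
  (Int.isUnit_iff.1 (QuadraticAlgebra.isUnit_iff_norm_isUnit.1 hu)).resolve_right
    fun h => by linarith [norm_nonneg u]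

theorem eq_one_of_isUnit {u : EisensteinInt} (hu : IsUnit u) (h : (3 : EisensteinInt) ∣ u - 1) :
    u = 1 := by
  have hn := norm_eq_one_of_isUnit hu
  obtain ⟨⟨s, hs⟩, ⟨t, ht⟩⟩ := three_dvd_iff.1 h
  simp only [QuadraticAlgebra.re_sub, QuadraticAlgebra.im_sub, QuadraticAlgebra.re_one,
    QuadraticAlgebra.im_one, sub_zero] at hs ht
  rw [norm_eq, eq_add_of_sub_eq hs, ht] at hn
  -- `3 (s² + st + t²) = -(2s + t)`, and `(2s + t)² ≤ 4 (s² + st + t²)`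
  have hs0 : s = 0 := by
    nlinarith [sq_nonneg (s + t), sq_nonneg s, sq_nonneg t, sq_nonneg (2 * s + t)]
  have ht0 : t = 0 := by subst hs0; nlinarith
  ext <;> simp [eq_add_of_sub_eq hs, ht, hs0, ht0]

theorem exists_isUnit_three_dvd_mul_sub_one {x : EisensteinInt} (hx : ¬ 3 ∣ x.norm) :
    ∃ u : EisensteinInt, IsUnit u ∧ (3 : EisensteinInt) ∣ u * x - 1 := by
  -- the six units `±1, ±ζ, ±ζ²`, as pairs `(re, im)`
  have key : ∀ i j : ZMod 3, i ^ 2 + i * j + j ^ 2 ≠ 0 →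
      ∃ u ∈ ([(1, 0), (-1, 0), (0, 1), (0, -1), (-1, 1), (1, -1)] : List (ℤ × ℤ)),
      u.1 ^ 2 + u.1 * u.2 + u.2 ^ 2 = 1 ∧
      (u.1 : ZMod 3) * i - u.2 * j - 1 = 0 ∧ (u.1 : ZMod 3) * j + u.2 * i + u.2 * j = 0 := by
    decide
  have hx3 : (x.re : ZMod 3) ^ 2 + x.re * x.im + (x.im : ZMod 3) ^ 2 ≠ 0 := fun h0 =>
    hx ((ZMod.intCast_zmod_eq_zero_iff_dvd _ 3).1 (by rw [norm_eq]; push_cast; exact h0))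
  obtain ⟨⟨c, d⟩, -, hnorm, hre, him⟩ := key _ _ hx3
  refine ⟨⟨c, d⟩, QuadraticAlgebra.isUnit_iff_norm_isUnit.2 ?_,
    three_dvd_iff.2 ⟨?_, ?_⟩⟩
  · rw [norm_eq]; simp [hnorm]
  · refine (ZMod.intCast_zmod_eq_zero_iff_dvd _ 3).1 ?_
    simp only [QuadraticAlgebra.re_sub, QuadraticAlgebra.re_mul, QuadraticAlgebra.re_one]
    push_cast
    linear_combination hre
  · refine (ZMod.intCast_zmod_eq_zero_iff_dvd _ 3).1 ?_
    simp only [QuadraticAlgebra.im_sub, QuadraticAlgebra.im_mul, QuadraticAlgebra.im_one]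
    push_cast
    linear_combination him

/-- Every element of norm prime to `3` has exactly one associate that is `≡ 1 mod 3`. -/
def primaryOfNorm (N : ℤ) : Set EisensteinInt :=
  {z | z.norm = N ∧ (3 : EisensteinInt) ∣ z - 1}

theorem mapsTo_mul_primaryOfNorm (N M : ℤ) :
    Set.MapsTo (fun p => p.1 * p.2) (primaryOfNorm N ×ˢ primaryOfNorm M)
      (primaryOfNorm (N * M)) := fun _ ⟨hx, hy⟩ =>
  ⟨by rw [map_mul, hx.1, hy.1], dvd_mul_sub_one hx.2 hy.2⟩

theorem injOn_mul_primaryOfNorm {N M : ℤ} (h : IsCoprime N M) :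
    Set.InjOn (fun p => p.1 * p.2) (primaryOfNorm N ×ˢ primaryOfNorm M) := by
  rintro ⟨x, y⟩ ⟨hx, hy⟩ ⟨x', y'⟩ ⟨hx', hy'⟩ (heq : x * y = x' * y')
  have hxx' : x ∣ x' := (QuadraticAlgebra.isCoprime_of_isCoprime_norm
    (by rw [hx.1, hy'.1]; exact h)).dvd_of_dvd_mul_right ⟨y, heq.symm⟩
  have hx'x : x' ∣ x := (QuadraticAlgebra.isCoprime_of_isCoprime_norm
    (by rw [hx'.1, hy.1]; exact h)).dvd_of_dvd_mul_right ⟨y', heq⟩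
  obtain ⟨u, hu⟩ := associated_of_dvd_dvd hxx' hx'x
  have hu1 : (u : EisensteinInt) = 1 :=
    eq_one_of_isUnit u.isUnit (dvd_sub_one_of_dvd_mul_sub_one hx.2 (hu ▸ hx'.2))
  rw [hu1, mul_one] at hu
  subst hu
  exact Prod.ext rfl (mul_left_cancel₀ (ne_zero_of_three_dvd_sub_one hx.2) heq)

theorem exists_mul_eq_of_norm_eq_mul {N M : ℤ} (hN : 0 < N) (hM : 0 < M) (h : IsCoprime N M)
    {w : EisensteinInt} (hw : w.norm = N * M) :
    ∃ x y : EisensteinInt, x.norm = N ∧ y.norm = M ∧ x * y = w := by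
  have hdvd : w ∣ (N : EisensteinInt) * M :=
    ⟨star w, by rw [← QuadraticAlgebra.algebraMap_norm_eq_mul_star, hw]; simp⟩
  obtain ⟨x, y, hxN, hyM, rfl⟩ := exists_dvd_and_dvd_of_dvd_mul hdvd
  have hxy : x.norm * y.norm = N * M := by rw [← map_mul, hw]
  have hx : x.norm ∣ N := (h.pow_left.of_isCoprime_of_dvd_left (by
    simpa using map_dvd QuadraticAlgebra.norm hxN)).dvd_of_dvd_mul_right ⟨y.norm, hxy.symm⟩
  have hy : y.norm ∣ M := (h.symm.pow_left.of_isCoprime_of_dvd_left (by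
    simpa using map_dvd QuadraticAlgebra.norm hyM)).dvd_of_dvd_mul_left
      ⟨x.norm, by rw [← hxy, mul_comm]⟩
  have hxle := Int.le_of_dvd hN hx
  have hyle := Int.le_of_dvd hM hy
  have hx0 := norm_nonneg x
  have hy0 := norm_nonneg y
  refine ⟨x, y, ?_, ?_, rfl⟩ <;> nlinarith

theorem surjOn_mul_primaryOfNorm {N M : ℤ} (hN : 0 < N) (hM : 0 < M) (h : IsCoprime N M) :
    Set.SurjOn (fun p => p.1 * p.2) (primaryOfNorm N ×ˢ primaryOfNorm M)
      (primaryOfNorm (N * M)) := by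
  rintro w ⟨hw, hw3⟩
  obtain ⟨x, y, hx, hy, rfl⟩ := exists_mul_eq_of_norm_eq_mul hN hM h hw
  have hx3 : ¬ 3 ∣ x.norm := fun h3 => by
    have := QuadraticAlgebra.dvd_norm_sub_one (k := 3) hw3
    rw [map_mul, ← dvd_sub_right (dvd_mul_of_dvd_left h3 y.norm), sub_sub_cancel] at this
    norm_num at this
  obtain ⟨u, hu, hux⟩ := exists_isUnit_three_dvd_mul_sub_one hx3
  obtain ⟨v, huv⟩ := hu.exists_right_inv
  have hprod : u * x * (v * y) = x * y := by
    rw [mul_mul_mul_comm, huv, one_mul]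
  have hux_norm : (u * x).norm = N := by rw [map_mul, norm_eq_one_of_isUnit hu, hx, one_mul]
  have hvy_norm : (v * y).norm = M := by
    rw [map_mul, norm_eq_one_of_isUnit (IsUnit.of_mul_eq_one_right u huv), hy, one_mul]
  exact ⟨(u * x, v * y), ⟨⟨hux_norm, hux⟩,
    ⟨hvy_norm, dvd_sub_one_of_dvd_mul_sub_one hux (hprod ▸ hw3)⟩⟩, hprod⟩

theorem ncard_primaryOfNorm_mul {N M : ℤ} (hN : 0 < N) (hM : 0 < M) (h : IsCoprime N M) :
    (primaryOfNorm (N * M)).ncard = (primaryOfNorm N).ncard * (primaryOfNorm M).ncard := by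
  rw [← Set.ncard_prod]
  exact (Set.BijOn.ncard_eq ⟨mapsTo_mul_primaryOfNorm N M, injOn_mul_primaryOfNorm h,
    surjOn_mul_primaryOfNorm hN hM h⟩).symm

end EisensteinInt

open EisensteinInt in
theorem ncard_C_eq_ncard_primaryOfNorm (n : ℤ) :
    (C n).ncard = (primaryOfNorm (3 * n + 1)).ncard := by
  refine Set.BijOn.ncard_eq (f := fun p => ⟨3 * p.1 + 3 * p.2 + 1, -(3 * p.1)⟩) ⟨?_, ?_, ?_⟩
  · intro p (hp : 3 * p.1 ^ 2 + 3 * p.1 * p.2 + 3 * p.2 ^ 2 + p.1 + 2 * p.2 = n)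
    refine ⟨?_, three_dvd_iff.2 ⟨⟨p.1 + p.2, by simp; ring⟩, ⟨-p.1, by simp⟩⟩⟩
    rw [norm_eq]
    linear_combination 3 * hp
  · intro p _ q _ hpq
    simp only [QuadraticAlgebra.mk.injEq] at hpq
    exact Prod.ext (by omega) (by omega)
  · rintro z ⟨hz, hz3⟩
    obtain ⟨⟨s, hs⟩, ⟨t, ht⟩⟩ := three_dvd_iff.1 hz3
    simp only [QuadraticAlgebra.re_sub, QuadraticAlgebra.im_sub, QuadraticAlgebra.re_one,
      QuadraticAlgebra.im_one, sub_zero] at hs ht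
    rw [norm_eq, eq_add_of_sub_eq hs, ht] at hz
    refine ⟨(-t, s + t), show _ = n by linarith, ?_⟩
    ext <;> simp <;> linarith

theorem stmt14_general (n m : ℕ)
    (h : Nat.Coprime (3 * n + 1) (3 * m + 1)) :
    (C ((3 * m * n + m + n : ℕ) : ℤ)).ncard =
      (C (n : ℤ)).ncard * (C (m : ℤ)).ncard := by
  have hcop : IsCoprime (3 * (n : ℤ) + 1) (3 * m + 1) := by
    exact_mod_cast Nat.isCoprime_iff_coprime.2 h
  rw [ncard_C_eq_ncard_primaryOfNorm, ncard_C_eq_ncard_primaryOfNorm,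
    ncard_C_eq_ncard_primaryOfNorm,
    ← EisensteinInt.ncard_primaryOfNorm_mul (by positivity) (by positivity) hcop]
  congr 2
  push_cast
  ring

theorem stmt14 (n m : ℕ) (hn : 1 ≤ n) (hm : 1 ≤ m)
    (h : Nat.Coprime (3 * n + 1) (3 * m + 1)) :
    (C ((3 * m * n + m + n : ℕ) : ℤ)).ncard =
      (C (n : ℤ)).ncard * (C (m : ℤ)).ncard :=
  stmt14_general n m h
end

section
/- Let n ≥ 0 and m ≥ 1 be integers and set N = 4^m·n + (10·4^{m−1} − 1)/3 (which is an integer). Then there is no 3-core partition of N, i.e. C_N = ∅ (equivalently a₃(N) = 0). -/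
/-!
Multiplying by 3 and adding 1, `(x, y) ∈ C N` means `3N + 1 = a² + ab + b²` with `a = 3x`, `b = 3y + 1`.
The form `a² + ab + b²` is odd unless `a` and `b` are both even, so by descent its
`2`-adic valuation is always even; but `3N + 1 = 2 · 4^(m-1) · (6n + 5)` has odd valuation.
-/

lemma two_dvd_of_two_dvd_sq_add_mul_add_sq {a b : ℤ} (h : 2 ∣ a ^ 2 + a * b + b ^ 2) :
    2 ∣ a ∧ 2 ∣ b := by
  have hmod : ∀ x y : ZMod 2, x ^ 2 + x * y + y ^ 2 = 0 → x = 0 ∧ y = 0 := by decide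
  have hcast (z : ℤ) : (z : ZMod 2) = 0 ↔ 2 ∣ z := by
    exact_mod_cast ZMod.intCast_zmod_eq_zero_iff_dvd z 2
  simp only [← hcast] at h ⊢
  push_cast at h
  exact hmod _ _ h

lemma sq_add_mul_add_sq_ne_two_mul_four_pow_mul (k : ℕ) {a b c : ℤ} (hc : Odd c) :
    a ^ 2 + a * b + b ^ 2 ≠ 2 * 4 ^ k * c := by
  intro h
  obtain ⟨⟨x, rfl⟩, ⟨y, rfl⟩⟩ :=
    two_dvd_of_two_dvd_sq_add_mul_add_sq ⟨4 ^ k * c, h.trans (by ring)⟩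
  cases k with
  | zero =>
    obtain ⟨d, rfl⟩ := hc
    have h' : 4 * (x ^ 2 + x * y + y ^ 2) = 2 * (2 * d + 1) := by linear_combination h
    omega
  | succ k =>
    refine sq_add_mul_add_sq_ne_two_mul_four_pow_mul k (a := x) (b := y) hc ?_
    exact mul_left_cancel₀ four_ne_zero (by linear_combination h)

lemma C_eq_empty_of_three_mul_add_one_eq {N c : ℤ} (k : ℕ) (hc : Odd c)
    (hN : 3 * N + 1 = 2 * 4 ^ k * c) : C N = ∅ := by
  refine Set.eq_empty_of_forall_notMem fun ⟨x, y⟩ (h : _ = N) => ?_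
  refine sq_add_mul_add_sq_ne_two_mul_four_pow_mul k (a := 3 * x) (b := 3 * y + 1) hc ?_
  rw [← hN, ← h]
  ring

lemma three_mul_add_one_eq (n k : ℕ) :
    3 * (4 ^ (k + 1) * n + (10 * 4 ^ k - 1) / 3) + 1 = 2 * 4 ^ k * (6 * n + 5) := by
  have hmod : 4 ^ k % 3 = 1 := by simp [Nat.pow_mod]
  have hpos : 1 ≤ 4 ^ k := Nat.one_le_pow _ _ four_pos
  rw [show 4 ^ (k + 1) * n = 4 * (4 ^ k * n) by ring,
    show 2 * 4 ^ k * (6 * n + 5) = 12 * (4 ^ k * n) + 10 * 4 ^ k by ring]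
  omega

theorem stmt17 (n m N : ℕ) (hm : 1 ≤ m)
    (hN : N = 4 ^ m * n + (10 * 4 ^ (m - 1) - 1) / 3) :
    C (N : ℤ) = ∅ := by
  obtain ⟨k, rfl⟩ := Nat.exists_eq_add_of_le' hm
  refine C_eq_empty_of_three_mul_add_one_eq k (c := 6 * n + 5) ⟨3 * n + 2, by ring⟩ ?_
  rw [hN]
  exact_mod_cast three_mul_add_one_eq n k
end

section
/- Let n ≥ 0, m ≥ 1, k ≥ 1 be integers and let p be a prime with p ≡ 2 (mod 3) such that ν_p(6k−1) is odd and m ≢ 2k−1 (mod p). Set N = (6k−1)²n + (6k−1)m + 4k−1. Then there is no 3-core partition of N, i.e. C_N = ∅ (equivalently a₃(N) = 0). -/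
lemma three_mul_add_one_eq_of_mem_C {n x y : ℤ} (h : (x, y) ∈ C n) :
    3 * n + 1 = (3 * x) ^ 2 + 3 * x * (3 * y + 1) + (3 * y + 1) ^ 2 := by
  simp only [C, Set.mem_ofPred_eq] at h
  linear_combination -3 * h

namespace FiniteField

variable {K : Type*} [Field K] [Fintype K]

lemma three_ne_zero_of_card_mod_three_eq_two (hK : Fintype.card K % 3 = 2) : (3 : K) ≠ 0 := by
  intro h3
  have hcard : ((3 * (Fintype.card K / 3) + 2 : ℕ) : K) = 0 := by
    rw [← hK, Nat.div_add_mod]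
    exact cast_card_eq_zero K
  push_cast [h3] at hcard
  exact one_ne_zero (by linear_combination h3 - hcard : (1 : K) = 0)

lemma eq_of_pow_three_eq (hK : Fintype.card K % 3 = 2) {a b : K} (h : a ^ 3 = b ^ 3) :
    a = b := by
  by_cases hb : b = 0
  · subst hb
    simpa using h
  have hcop : Nat.gcd 3 (Fintype.card K - 1) = 1 :=
    (Nat.Prime.coprime_iff_not_dvd Nat.prime_three).mpr (by omega)
  have ha : a ≠ 0 := by
    rintro rfl
    exact hb (pow_eq_zero_iff three_ne_zero |>.mp (h.symm.trans (zero_pow three_ne_zero)))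
  have hcube : (a / b) ^ 3 = 1 := by rw [div_pow, h, div_self (pow_ne_zero 3 hb)]
  have hfermat : (a / b) ^ (Fintype.card K - 1) = 1 :=
    pow_card_sub_one_eq_one _ (div_ne_zero ha hb)
  have hone : a / b = 1 := by simpa [hcop] using pow_gcd_eq_one.mpr ⟨hcube, hfermat⟩
  exact (div_eq_one_iff_eq hb).mp hone

lemma eq_zero_of_sq_add_mul_add_sq_eq_zero (hK : Fintype.card K % 3 = 2) {a b : K}
    (h : a ^ 2 + a * b + b ^ 2 = 0) : a = 0 ∧ b = 0 := by
  have hab : a = b := eq_of_pow_three_eq hK (by linear_combination (a - b) * h)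
  subst hab
  have : 3 * a ^ 2 = 0 := by linear_combination h
  have ha : a = 0 := pow_eq_zero_iff two_ne_zero |>.mp
    ((mul_eq_zero.mp this).resolve_left (three_ne_zero_of_card_mod_three_eq_two hK))
  exact ⟨ha, ha⟩

end FiniteField

theorem Nat.even_factorization_of_eq_sq_add_mul_add_sq {p : ℕ} [hp : Fact p.Prime]
    (hp3 : p % 3 = 2) {M : ℕ} (hM : M ≠ 0) {u v : ℤ} (h : (M : ℤ) = u ^ 2 + u * v + v ^ 2) :
    Even (M.factorization p) := by
  induction M using Nat.strong_induction_on generalizing u v with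
  | _ M ih =>
  by_cases hpM : p ∣ M
  swap
  · simp [Nat.factorization_eq_zero_of_not_dvd hpM]
  have hmod : (u : ZMod p) ^ 2 + u * v + v ^ 2 = 0 := by
    have := (ZMod.natCast_eq_zero_iff M p).mpr hpM
    rw [← Int.cast_natCast, h] at this
    push_cast at this
    exact this
  obtain ⟨hu, hv⟩ :=
    FiniteField.eq_zero_of_sq_add_mul_add_sq_eq_zero (by rwa [ZMod.card]) hmod
  obtain ⟨u, rfl⟩ := (ZMod.intCast_zmod_eq_zero_iff_dvd u p).mp hu
  obtain ⟨v, rfl⟩ := (ZMod.intCast_zmod_eq_zero_iff_dvd v p).mp hv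
  have hp2 : (p : ℤ) ^ 2 ∣ M := ⟨u ^ 2 + u * v + v ^ 2, by rw [h]; ring⟩
  obtain ⟨Q, rfl⟩ : p ^ 2 ∣ M := by exact_mod_cast hp2
  have hQ0 : Q ≠ 0 := right_ne_zero_of_mul hM
  have hQ : (Q : ℤ) = u ^ 2 + u * v + v ^ 2 := by
    refine mul_left_cancel₀ (pow_ne_zero 2 (Int.natCast_ne_zero.mpr hp.out.ne_zero)) ?_
    push_cast at h
    linear_combination h
  have hQlt : Q < p ^ 2 * Q :=
    (lt_mul_iff_one_lt_left (Nat.pos_of_ne_zero hQ0)).mpr (Nat.one_lt_pow two_ne_zero hp.out.one_lt)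
  rw [Nat.factorization_mul (pow_ne_zero 2 hp.out.ne_zero) hQ0, Finsupp.add_apply,
    Nat.Prime.factorization_pow hp.out, Finsupp.single_eq_same]
  exact even_two.add (ih Q hQlt hQ0 hQ)

lemma three_mul_add_one_eq_mul {n m k : ℕ} (hk : 1 ≤ k) :
    3 * ((6 * k - 1) ^ 2 * n + (6 * k - 1) * m + (4 * k - 1)) + 1 =
      (6 * k - 1) * (3 * (6 * k - 1) * n + 3 * m + 2) := by
  zify [show 1 ≤ 6 * k by omega, show 1 ≤ 4 * k by omega]
  ring

lemma not_dvd_three_mul_add_three_mul_add_two {p n m k : ℕ} [Fact p.Prime] (hp3 : p % 3 = 2)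
    (hk : 1 ≤ k) (hpk : p ∣ 6 * k - 1) (hmk : ¬ m ≡ 2 * k - 1 [MOD p]) :
    ¬ p ∣ 3 * (6 * k - 1) * n + 3 * m + 2 := by
  intro hpB
  apply hmk
  rw [← ZMod.natCast_eq_natCast_iff]
  rw [← ZMod.natCast_eq_zero_iff] at hpk hpB
  push_cast [show 1 ≤ 6 * k by omega] at hpk hpB
  push_cast [show 1 ≤ 2 * k by omega]
  refine mul_left_cancel₀
    (FiniteField.three_ne_zero_of_card_mod_three_eq_two (by rwa [ZMod.card])) ?_
  -- mod `p` we have `6k = 1`, so `3m + 2 = 3(m - (2k - 1))`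
  linear_combination hpB - (3 * (n : ZMod p) + 1) * hpk

theorem stmt18_general (n m k N : ℕ) (hk : 1 ≤ k) (p : ℕ) (hp : p.Prime)
    (hp3 : p % 3 = 2) (hodd : Odd ((6 * k - 1).factorization p))
    (hmk : ¬ m ≡ 2 * k - 1 [MOD p])
    (hN : N = (6 * k - 1) ^ 2 * n + (6 * k - 1) * m + (4 * k - 1)) :
    C (N : ℤ) = ∅ := by
  have := Fact.mk hp
  have hpA : p ∣ 6 * k - 1 := Nat.dvd_of_factorization_pos hodd.pos.ne'
  have hpB := not_dvd_three_mul_add_three_mul_add_two (n := n) hp3 hk hpA hmk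
  have hval : Odd ((3 * N + 1).factorization p) := by
    rw [hN, three_mul_add_one_eq_mul hk, Nat.factorization_mul (by omega) (by omega),
      Finsupp.add_apply, Nat.factorization_eq_zero_of_not_dvd hpB, add_zero]
    exact hodd
  refine Set.eq_empty_of_forall_notMem fun ⟨x, y⟩ hxy => Nat.not_even_iff_odd.mpr hval ?_
  refine Nat.even_factorization_of_eq_sq_add_mul_add_sq hp3 (by omega) (u := 3 * x)
    (v := 3 * y + 1) ?_
  push_cast
  exact three_mul_add_one_eq_of_mem_C hxy

theorem stmt18 (n m k N : ℕ) (hm : 1 ≤ m) (hk : 1 ≤ k) (p : ℕ) (hp : p.Prime)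
    (hp3 : p % 3 = 2) (hodd : Odd ((6 * k - 1).factorization p))
    (hmk : ¬ m ≡ 2 * k - 1 [MOD p])
    (hN : N = (6 * k - 1) ^ 2 * n + (6 * k - 1) * m + (4 * k - 1)) :
    C (N : ℤ) = ∅ :=
  stmt18_general n m k N hk p hp hp3 hodd hmk hN
end
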